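/- Let α ∈ (0,2) with α ≠ 1 and c > 0. The inflection point of SIGTRON lies in the interior of dom(σ_{α,c}): the point x_ip = −ln_{α,c}(cα/(2−α)) belongs to the interior of dom(σ_{α,c}), and for x in this interior the second derivative s_{α,c}''(x) vanishes if and only if x = x_ip. (When α = 1, the inflection point of s_{1,c}(x) = 1/(1+e^{−x}) is x = 0.) -/

import Mathlib

/-- `c_α = c^{1−α}/(α−1)` (real power). -/
noncomputable def cA (α c : ℝ) : ℝ := c ^ (1 - α) / (α - 1)

/-- SIGTRON: extended asymmetric sigmoid with Perceptron. -/
noncomputable def sigtron (α c : ℝ) (x : ℝ) : ℝ :=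
  if α = 1 then 1 / (1 + Real.exp (-x))
  else if α < 1 then
    if x ≤ -(cA α c) then 1 / (1 + (1 + x / cA α c) ^ ((1 : ℝ) / (1 - α))) else 1
  else
    if -(cA α c) < x then 1 / (1 + (1 + x / cA α c) ^ ((1 : ℝ) / (1 - α))) else 0


/-- Extended logarithm `ln_{α,c}(y) = c_α − y^{1−α}/(α−1)` for `α ≠ 1`
(`ln_{1,c}(y) = log(y/c)`). -/
noncomputable def lnA (α c : ℝ) (y : ℝ) : ℝ :=
  if α = 1 then Real.log (y / c) else cA α c - y ^ (1 - α) / (α - 1)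

/-!
With `u = 1 + x / c_α` and `p = 1 / (1 - α)`, SIGTRON is `(1 + u ^ p)⁻¹` on the interior of its
domain, which is exactly where `u > 0`. Differentiating twice gives
`s'' = -(p / c_α²) u ^ (p - 2) ((p - 1) - (p + 1) u ^ p) / (1 + u ^ p) ^ 3`, which vanishes iff
`u ^ p = (p - 1) / (p + 1) = α / (2 - α)`, i.e. `u = (α / (2 - α)) ^ (1 - α)`. Unfolding `ln_{α,c}`
shows that this value of `u` is `1 + x_ip / c_α`; being positive, it also puts `x_ip` in the
interior of the domain.
-/

open Real Filter Topology

noncomputable def sigtronBranch (a p x : ℝ) : ℝ := (1 + (1 + x / a) ^ p)⁻¹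

noncomputable def sigtronBranchDeriv (a p x : ℝ) : ℝ :=
  -(p / a) * ((1 + x / a) ^ (p - 1) / (1 + (1 + x / a) ^ p) ^ 2)

section Branch

variable {a p x : ℝ}

lemma hasDerivAt_one_add_div (a x : ℝ) : HasDerivAt (fun z : ℝ => 1 + z / a) a⁻¹ x := by
  simpa [one_div] using ((hasDerivAt_id x).div_const a).const_add 1

lemma eventually_one_add_div_pos (hx : 0 < 1 + x / a) : ∀ᶠ y in 𝓝 x, 0 < 1 + y / a :=
  (isOpen_lt continuous_const (by fun_prop) : IsOpen {y : ℝ | 0 < 1 + y / a}).mem_nhds hx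

lemma hasDerivAt_sigtronBranch (hx : 0 < 1 + x / a) :
    HasDerivAt (sigtronBranch a p) (sigtronBranchDeriv a p x) x := by
  have hq : HasDerivAt (fun z => 1 + (1 + z / a) ^ p) (a⁻¹ * p * (1 + x / a) ^ (p - 1)) x :=
    ((hasDerivAt_one_add_div a x).rpow_const (Or.inl hx.ne')).const_add 1
  exact (hq.inv (by positivity)).congr_deriv (by unfold sigtronBranchDeriv; ring)

lemma hasDerivAt_sigtronBranchDeriv (hx : 0 < 1 + x / a) :
    HasDerivAt (sigtronBranchDeriv a p)
      (-(p / a ^ 2) * (1 + x / a) ^ (p - 2) * ((p - 1) - (p + 1) * (1 + x / a) ^ p) /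
        (1 + (1 + x / a) ^ p) ^ 3) x := by
  have hu := hasDerivAt_one_add_div a x
  have hnum := hu.rpow_const (p := p - 1) (Or.inl hx.ne')
  have hden := ((hu.rpow_const (p := p) (Or.inl hx.ne')).const_add 1).fun_pow 2
  refine ((hnum.div hden (by positivity)).const_mul (-(p / a))).congr_deriv ?_
  have e1 : (1 + x / a) ^ (p - 1) = (1 + x / a) ^ (p - 2) * (1 + x / a) := by
    rw [← rpow_add_one hx.ne', show p - 2 + 1 = p - 1 by ring]
  have e2 : (1 + x / a) ^ p = (1 + x / a) ^ (p - 2) * (1 + x / a) ^ 2 := by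
    rw [← rpow_two, ← rpow_add hx, sub_add_cancel]
  rw [show p - 1 - 1 = p - 2 by ring, e1, e2]
  have : 1 + (1 + x / a) ^ (p - 2) * (1 + x / a) ^ 2 ≠ 0 := by rw [← e2]; positivity
  field_simp
  ring

lemma iteratedDeriv_two_sigtronBranch (hx : 0 < 1 + x / a) :
    iteratedDeriv 2 (sigtronBranch a p) x =
      -(p / a ^ 2) * (1 + x / a) ^ (p - 2) * ((p - 1) - (p + 1) * (1 + x / a) ^ p) /
        (1 + (1 + x / a) ^ p) ^ 3 := by
  have hderiv : deriv (sigtronBranch a p) =ᶠ[𝓝 x] sigtronBranchDeriv a p := by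
    filter_upwards [eventually_one_add_div_pos hx] with y hy
    exact (hasDerivAt_sigtronBranch hy).deriv
  rw [iteratedDeriv_succ, iteratedDeriv_one, hderiv.deriv_eq,
    (hasDerivAt_sigtronBranchDeriv hx).deriv]

lemma iteratedDeriv_two_sigtronBranch_eq_zero_iff (ha : a ≠ 0) (hp : p ≠ 0) (hp1 : p + 1 ≠ 0)
    (hx : 0 < 1 + x / a) :
    iteratedDeriv 2 (sigtronBranch a p) x = 0 ↔ (1 + x / a) ^ p = (p - 1) / (p + 1) := by
  have hcoef : -(p / a ^ 2) * (1 + x / a) ^ (p - 2) ≠ 0 := by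
    have : 0 < (1 + x / a) ^ (p - 2) := by positivity
    simp [hp, ha, this.ne']
  rw [iteratedDeriv_two_sigtronBranch hx, div_eq_zero_iff, or_iff_left (by positivity),
    mul_eq_zero, or_iff_right hcoef, eq_div_iff hp1, sub_eq_zero, eq_comm, mul_comm]

end Branch

section Sigtron

variable {α c x : ℝ}

lemma cA_neg (hα : α < 1) (hc : 0 < c) : cA α c < 0 :=
  div_neg_of_pos_of_neg (rpow_pos_of_pos hc _) (by linarith)

lemma cA_pos (hα : 1 < α) (hc : 0 < c) : 0 < cA α c :=
  div_pos (rpow_pos_of_pos hc _) (by linarith)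

lemma cA_ne_zero (hα : α ≠ 1) (hc : 0 < c) : cA α c ≠ 0 :=
  div_ne_zero (rpow_pos_of_pos hc _).ne' (sub_ne_zero.mpr hα)

lemma one_add_div_cA_pos_iff (hα : α ≠ 1) (hc : 0 < c) :
    0 < 1 + x / cA α c ↔ ((α < 1 → x < -cA α c) ∧ (1 < α → -cA α c < x)) := by
  rw [← neg_lt_iff_pos_add']
  rcases hα.lt_or_gt with h | h
  · rw [lt_div_iff_of_neg (cA_neg h hc)]
    simp [h, h.not_gt]
  · rw [lt_div_iff₀ (cA_pos h hc)]
    simp [h, h.not_gt]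

lemma sigtron_eq_sigtronBranch (hα : α ≠ 1) (hc : 0 < c) (hx : 0 < 1 + x / cA α c) :
    sigtron α c x = sigtronBranch (cA α c) (1 / (1 - α)) x := by
  have hdom := (one_add_div_cA_pos_iff hα hc).mp hx
  rcases hα.lt_or_gt with h | h
  · simp [sigtron, sigtronBranch, hα, h, (hdom.1 h).le]
  · simp [sigtron, sigtronBranch, hα, h.not_gt, hdom.2 h]

lemma sigtron_eventuallyEq_sigtronBranch (hα : α ≠ 1) (hc : 0 < c) (hx : 0 < 1 + x / cA α c) :
    sigtron α c =ᶠ[𝓝 x] sigtronBranch (cA α c) (1 / (1 - α)) := by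
  filter_upwards [eventually_one_add_div_pos hx] with y hy
  exact sigtron_eq_sigtronBranch hα hc hy

lemma one_add_neg_lnA_div_cA (hα : α ≠ 1) (hc : 0 < c) {t : ℝ} (ht : 0 ≤ t) :
    1 + -lnA α c (c * t) / cA α c = t ^ (1 - α) := by
  have : c ^ (1 - α) ≠ 0 := (rpow_pos_of_pos hc _).ne'
  have : α - 1 ≠ 0 := sub_ne_zero.mpr hα
  rw [lnA, if_neg hα, mul_rpow hc.le ht, cA]
  field_simp
  ring

end Sigtron

/-- For `α ∈ (0,2)`, `α ≠ 1` and `c > 0`, the point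
`x_ip = −ln_{α,c}(cα/(2−α))` lies in the interior of `dom(σ_{α,c})`, and for `x` in
this interior the second derivative of SIGTRON vanishes iff `x = x_ip`. -/
theorem sigtron_stmt11 (α c : ℝ) (hα : α ∈ Set.Ioo (0 : ℝ) 2) (hα1 : α ≠ 1)
    (hc : 0 < c) (xip : ℝ) (hxip : xip = -lnA α c (c * α / (2 - α))) :
    ((α < 1 → xip < -(cA α c)) ∧ (1 < α → -(cA α c) < xip)) ∧
    (∀ x, ((α < 1 → x < -(cA α c)) ∧ (1 < α → -(cA α c) < x)) →
      (iteratedDeriv 2 (sigtron α c) x = 0 ↔ x = xip)) := by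
  obtain ⟨hα0, hα2⟩ := hα
  have h1α : 1 - α ≠ 0 := sub_ne_zero.mpr hα1.symm
  have h2α : 2 - α ≠ 0 := by linarith
  set t := α / (2 - α)
  have ht0 : 0 ≤ t := div_nonneg hα0.le (by linarith)
  have hxip_eq : 1 + xip / cA α c = t ^ (1 - α) := by
    rw [hxip, mul_div_assoc, one_add_neg_lnA_div_cA hα1 hc ht0]
  refine ⟨(one_add_div_cA_pos_iff hα1 hc).mp (hxip_eq ▸ by positivity), fun x hx => ?_⟩
  have hx' := (one_add_div_cA_pos_iff hα1 hc).mpr hx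
  have hp : 1 / (1 - α) ≠ 0 := one_div_ne_zero h1α
  have hp1 : 1 / (1 - α) + 1 ≠ 0 := by
    rw [div_add_one h1α, show 1 + (1 - α) = 2 - α by ring]
    exact div_ne_zero h2α h1α
  have hinfl : (1 / (1 - α) - 1) / (1 / (1 - α) + 1) = t := by
    field_simp
    ring
  rw [(sigtron_eventuallyEq_sigtronBranch hα1 hc hx').iteratedDeriv_eq,
    iteratedDeriv_two_sigtronBranch_eq_zero_iff (cA_ne_zero hα1 hc) hp hp1 hx', hinfl, one_div,
    rpow_inv_eq hx'.le ht0 h1α, ← hxip_eq, add_right_inj, div_left_inj' (cA_ne_zero hα1 hc)]
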